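/- arXiv:1510.07926 — 3 statements merged into one kernel-verified Lean document; each statement's English description precedes it below -/
import Mathlib

section
/- Let A(z) be the 4×4 matrix with rows [0, 1, z, 0], [1, 0, 0, z], [1, 0, 0, 0], [0, 1, 0, 0] over the polynomial ring in z. Then for every integer n > 1 and every j ≥ 0 with j ≤ n, the coefficient of z^j in trace(A(z)^(2n)) equals 2 * (2n/(2n-j)) * binomial(2n-j, j). -/
open Polynomial

/-- The de Bruijn matrix for the menage problem (with `y` specialized to `1`),
over the polynomial ring `ℚ[z]`. -/
noncomputable def menageMatrix : Matrix (Fin 4) (Fin 4) (Polynomial ℚ) :=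
  !![0, 1, X, 0;
     1, 0, 0, X;
     1, 0, 0, 0;
     0, 1, 0, 0]


lemma lsq : menageMatrix ^ 2 = !![1+X,0,0,X; 0,1+X,X,0; 0,1,X,0; 1,0,0,X] := by
  rw [pow_two]
  refine Matrix.ext fun i j => ?_
  fin_cases i <;> fin_cases j <;>
    simp [menageMatrix, Matrix.mul_apply, Fin.sum_univ_four, Matrix.vecHead, Matrix.vecTail]

lemma lkey : menageMatrix ^ 4 = ((1 + 2*X : ℚ[X]) • menageMatrix ^ 2) - ((X^2 : ℚ[X]) • 1) := by
  have h4 : menageMatrix ^ 4 = menageMatrix ^ 2 * menageMatrix ^ 2 := by rw [← pow_add]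
  rw [h4, lsq]
  refine Matrix.ext fun i j => ?_
  fin_cases i <;> fin_cases j <;>
    simp [Matrix.mul_apply, Fin.sum_univ_four, Matrix.one_apply,
      Matrix.vecHead, Matrix.vecTail] <;> ring

/-- Lucas polynomials. -/
noncomputable def L : ℕ → Polynomial ℚ
  | 0 => C 2
  | 1 => C 1
  | (m+2) => L (m+1) + X * L m

/-- coefficients of Lucas polynomials, as naturals -/
def lc : ℕ → ℕ → ℕ
  | 0, 0 => 2
  | 0, _+1 => 0
  | 1, 0 => 1
  | 1, _+1 => 0
  | (m+2), 0 => lc (m+1) 0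
  | (m+2), (j+1) => lc (m+1) (j+1) + lc m j

lemma coeff_L : ∀ m j, (L m).coeff j = (lc m j : ℚ) := by
  intro m
  induction m using Nat.strong_induction_on with
  | _ m ih =>
    match m with
    | 0 => intro j; cases j <;> simp [L, lc, coeff_one]
    | 1 => intro j; cases j <;> simp [L, lc, coeff_one]
    | (m+2) =>
      intro j
      cases j with
      | zero =>
        rw [show L (m+2) = L (m+1) + X * L m from rfl]
        simp [lc, mul_coeff_zero, ih (m+1) (by omega)]
      | succ j =>
        rw [show L (m+2) = L (m+1) + X * L m from rfl]
        rw [show lc (m+2) (j+1) = lc (m+1) (j+1) + lc m j from rfl]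
        push_cast
        rw [coeff_add, coeff_X_mul, ih (m+1) (by omega), ih m (by omega)]

lemma trace_eq : ∀ k, Matrix.trace (menageMatrix ^ (2*k)) = C 2 * L (2*k) := by
  intro k
  induction k using Nat.strong_induction_on with
  | _ k ih =>
    match k with
    | 0 => simp [L, Matrix.trace_one]; norm_num [map_ofNat]
    | 1 =>
      rw [show 2*1 = 2 from rfl, lsq, show L 2 = L 1 + X * L 0 from rfl]
      simp [L, Matrix.trace, Fin.sum_univ_four, Matrix.diag, Matrix.vecHead, Matrix.vecTail]
      norm_num [map_ofNat]
      ring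
    | (k+2) =>
      have e1 : menageMatrix ^ (2*(k+2)) = menageMatrix ^ (2*k) * menageMatrix ^ 4 := by
        rw [← pow_add]; ring_nf
      rw [e1, lkey, mul_sub, Matrix.mul_smul, Matrix.mul_smul, mul_one,
        Matrix.trace_sub, Matrix.trace_smul, Matrix.trace_smul,
        show menageMatrix ^ (2*k) * menageMatrix ^ 2 = menageMatrix ^ (2*(k+1)) by
          rw [← pow_add]; ring_nf,
        ih (k+1) (by omega), ih k (by omega)]
      rw [show 2*(k+2) = (2*k+2)+2 by ring, show 2*(k+1) = (2*k)+2 by ring]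
      rw [show L (2*k+2+2) = L (2*k+2+1) + X * L (2*k+2) from rfl,
        show L (2*k+2+1) = L (2*k+2) + X * L (2*k+1) from rfl,
        show L (2*k+2) = L (2*k+1) + X * L (2*k) from rfl]
      simp only [smul_eq_mul]
      ring


/-- closed form -/
def lcForm (m j : ℕ) : ℕ :=
  if 2*j ≤ m then
    (if j = 0 then (if m = 0 then 2 else 1)
     else Nat.choose (m-j) j + Nat.choose (m-j-1) (j-1))
  else 0

lemma lcForm_oor {m j : ℕ} (h : ¬ 2*j ≤ m) : lcForm m j = 0 := by
  simp [lcForm, h]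

lemma lcForm_zero_succ (m : ℕ) : lcForm (m+1) 0 = 1 := by
  simp [lcForm]

lemma lcForm_add (j a : ℕ) :
    lcForm (2*(j+1)+a) (j+1) = Nat.choose (j+1+a) (j+1) + Nat.choose (j+a) j := by
  have h2 : 2*(j+1) ≤ 2*(j+1)+a := by omega
  simp only [lcForm, if_pos h2, if_neg (Nat.succ_ne_zero j)]
  congr 2 <;> omega

lemma lc_closed : ∀ m j, lc m j = lcForm m j := by
  intro m
  induction m using Nat.strong_induction_on with
  | _ m ih =>
    match m with
    | 0 => intro j; cases j <;> simp [lc, lcForm]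
    | 1 =>
      intro j; cases j with
      | zero => simp [lc, lcForm]
      | succ j => rw [show lc 1 (j+1) = 0 from rfl, lcForm_oor (by omega)]
    | (m+2) =>
      intro j
      cases j with
      | zero =>
        rw [show lc (m+2) 0 = lc (m+1) 0 from rfl, ih (m+1) (by omega),
          show m+2 = (m+1)+1 from rfl, lcForm_zero_succ, lcForm_zero_succ]
      | succ j =>
        rw [show lc (m+2) (j+1) = lc (m+1) (j+1) + lc m j from rfl,
          ih (m+1) (by omega), ih m (by omega)]
        rcases lt_trichotomy (2*(j+1)) (m+2) with hc | hc | hc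
        · -- interior: 2(j+1) ≤ m+1
          obtain ⟨a, ha⟩ : ∃ a, m + 1 = 2*(j+1) + a := ⟨m+1-2*(j+1), by omega⟩
          cases j with
          | zero =>
            rw [show m+2 = 2*(0+1)+(a+1) by omega, show m+1 = 2*(0+1)+a by omega,
              lcForm_add, lcForm_add, show m = a+1 by omega, lcForm_zero_succ]
            simp [Nat.choose_one_right]
            omega
          | succ e =>
            rw [show m+2 = 2*(e+1+1)+(a+1) by omega, show m+1 = 2*(e+1+1)+a by omega,
              show m = 2*(e+1)+(a+1) by omega, lcForm_add, lcForm_add, lcForm_add]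
            rw [show e+1+1+(a+1) = e+a+2+1 by omega, show e+1+(a+1) = e+a+1+1 by omega,
              show e+1+1+a = e+a+1+1 by omega, show e+1+a = e+a+1 by omega,
              show e+(a+1) = e+a+1 by omega]
            rw [Nat.choose_succ_succ (e+a+2) (e+1), Nat.choose_succ_succ (e+a+1) e]
            ring
        · -- top coefficient: 2(j+1) = m+2
          rw [lcForm_oor (by omega : ¬ 2*(j+1) ≤ m+1)]
          cases j with
          | zero =>
            rw [show m = 0 by omega]
            rw [show (0:ℕ)+2 = 2*(0+1)+0 by norm_num, lcForm_add]
            simp [lcForm]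
          | succ e =>
            rw [show m+2 = 2*(e+1+1)+0 by omega, show m = 2*(e+1)+0 by omega,
              lcForm_add, lcForm_add]
            simp
        · -- out of range
          rw [lcForm_oor (by omega : ¬ 2*(j+1) ≤ m+2),
            lcForm_oor (by omega : ¬ 2*(j+1) ≤ m+1),
            lcForm_oor (by omega : ¬ 2*j ≤ m)]


/-- For `n > 1` and `0 ≤ j ≤ n`, the coefficient of `z^j` in `trace(A(z)^(2n))` equals
`2 * (2n/(2n-j)) * binomial(2n-j, j)`. -/
theorem coeff_trace_menageMatrix_pow (n j : ℕ) (hn : 1 < n) (hj : j ≤ n) :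
    (Matrix.trace (menageMatrix ^ (2 * n))).coeff j =
      2 * ((2 * n : ℚ) / (2 * n - j)) * (Nat.choose (2 * n - j) j : ℚ) := by
  rw [trace_eq n, coeff_C_mul, coeff_L, lc_closed]
  cases j with
  | zero =>
    have h1 : lcForm (2*n) 0 = 1 := by
      rw [show 2*n = (2*n-1)+1 by omega]; exact lcForm_zero_succ _
    have h2 : (2*(n:ℚ)) ≠ 0 := by positivity
    rw [h1]
    simp only [Nat.sub_zero, Nat.cast_zero, sub_zero, Nat.choose_zero_right, Nat.cast_one,
      mul_one, div_self h2]
  | succ e =>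
    obtain ⟨a, ha⟩ : ∃ a, 2*n = 2*(e+1) + a := ⟨2*n - 2*(e+1), by omega⟩
    have h1 : lcForm (2*n) (e+1) = Nat.choose (e+1+a) (e+1) + Nat.choose (e+a) e := by
      rw [show 2*n = 2*(e+1)+a from ha]; exact lcForm_add e a
    have h2 : 2*n - (e+1) = e+1+a := by omega
    have hkey : ((e:ℚ)+1+a) * (Nat.choose (e+a) e) = (Nat.choose (e+1+a) (e+1)) * ((e:ℚ)+1) := by
      have := Nat.add_one_mul_choose_eq (e+a) e
      have h' : (e+1+a) * Nat.choose (e+a) e = Nat.choose (e+1+a) (e+1) * (e+1) := by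
        rw [show e+1+a = e+a+1 by omega]; exact_mod_cast this
      exact_mod_cast congrArg (Nat.cast : ℕ → ℚ) h'
    have hden : (2*(n:ℚ)) - ((e:ℚ)+1) = (e:ℚ)+1+a := by
      have : (2*(n:ℚ)) = 2*(e+1) + a := by exact_mod_cast congrArg (Nat.cast : ℕ → ℚ) ha
      rw [this]; ring
    have hnum : (2*(n:ℚ)) = ((e:ℚ)+1+a) + ((e:ℚ)+1) := by
      rw [show (2*(n:ℚ)) = 2*(e+1) + a from by exact_mod_cast congrArg (Nat.cast : ℕ → ℚ) ha]
      ring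
    have hne : ((e:ℚ)+1+a) ≠ 0 := by positivity
    rw [h1, h2]
    push_cast
    rw [show ((2:ℚ)*n - (e+1)) = (e:ℚ)+1+a from by linarith, hnum]
    field_simp
    linear_combination hkey
end

section
/- Let U and V be square matrices of the same size with entries in a commutative ring R, and let z, t be indeterminates. Then for any integer n ≥ 0, the sum over j from 0 to n of (-1)^j * (n-j)! * [coefficient of z^j in trace((U + z*V)^n)] equals the result of taking trace((t*U - V)^n) as a polynomial in t and replacing each t^k by k!. -/
open Polynomial Matrix

section Aux

variable {R : Type*} [CommRing R] {m : ℕ}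

private lemma natDeg_pow_le (M : Matrix (Fin m) (Fin m) R[X])
    (h : ∀ i j, (M i j).natDegree ≤ 1) :
    ∀ n i j, ((M ^ n) i j).natDegree ≤ n := by
  intro n
  induction n with
  | zero =>
    intro i j
    rw [pow_zero]
    rcases eq_or_ne i j with rfl | hij
    · simp [Matrix.one_apply]
    · simp [Matrix.one_apply, hij]
  | succ n ih =>
    intro i j
    rw [pow_succ', Matrix.mul_apply]
    refine Polynomial.natDegree_sum_le_of_forall_le _ _ ?_
    intro l _
    calc (M i l * (M ^ n) l j).natDegree ≤ (M i l).natDegree + ((M ^ n) l j).natDegree :=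
          natDegree_mul_le
      _ ≤ 1 + n := add_le_add (h i l) (ih l j)
      _ = n + 1 := by omega

private lemma key (U V : Matrix (Fin m) (Fin m) R) :
    ∀ n a b, a + b = n → ∀ i j,
      ((((Polynomial.X : R[X]) • U.map Polynomial.C - V.map Polynomial.C) ^ n) i j).coeff a
        = (-1 : R) ^ b *
          (((U.map Polynomial.C + (Polynomial.X : R[X]) • V.map Polynomial.C) ^ n) i j).coeff b := by
  intro n
  induction n with
  | zero =>
    intro a b hab i j
    obtain ⟨rfl, rfl⟩ : a = 0 ∧ b = 0 := by omega
    rcases eq_or_ne i j with rfl | hij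
    · simp [Matrix.one_apply]
    · simp [Matrix.one_apply, hij]
  | succ n ih =>
    intro a b hab i j
    have hdegA : ∀ l j, (((U.map Polynomial.C + (Polynomial.X : R[X]) • V.map Polynomial.C) ^ n) l j).natDegree ≤ n := by
      refine natDeg_pow_le _ ?_ n
      intro i j
      simp only [Matrix.add_apply, Matrix.smul_apply, Matrix.map_apply, smul_eq_mul]
      calc (Polynomial.C (U i j) + Polynomial.X * Polynomial.C (V i j)).natDegree
          ≤ max (Polynomial.C (U i j)).natDegree (Polynomial.X * Polynomial.C (V i j)).natDegree :=
            natDegree_add_le _ _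
        _ ≤ 1 := by
            refine max_le (by simp) ?_
            refine natDegree_mul_le.trans ?_
            simpa using Polynomial.natDegree_X_le
    have hdegB : ∀ l j, ((((Polynomial.X : R[X]) • U.map Polynomial.C - V.map Polynomial.C) ^ n) l j).natDegree ≤ n := by
      refine natDeg_pow_le _ ?_ n
      intro i j
      simp only [Matrix.sub_apply, Matrix.smul_apply, Matrix.map_apply, smul_eq_mul]
      calc (Polynomial.X * Polynomial.C (U i j) - Polynomial.C (V i j)).natDegree
          ≤ max (Polynomial.X * Polynomial.C (U i j)).natDegree (Polynomial.C (V i j)).natDegree :=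
            natDegree_sub_le _ _
        _ ≤ 1 := by
            refine max_le ?_ (by simp)
            refine natDegree_mul_le.trans ?_
            simpa using Polynomial.natDegree_X_le
    rw [pow_succ', pow_succ', Matrix.mul_apply, Matrix.mul_apply,
      Polynomial.finset_sum_coeff, Polynomial.finset_sum_coeff, Finset.mul_sum]
    refine Finset.sum_congr rfl ?_
    intro l _
    set p : R[X] := (((Polynomial.X : R[X]) • U.map Polynomial.C - V.map Polynomial.C) ^ n) l j with hp
    set q : R[X] := ((U.map Polynomial.C + (Polynomial.X : R[X]) • V.map Polynomial.C) ^ n) l j with hq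
    have hBil : ((Polynomial.X : R[X]) • U.map Polynomial.C - V.map Polynomial.C) i l
        = Polynomial.X * Polynomial.C (U i l) - Polynomial.C (V i l) := by
      simp [Matrix.sub_apply, Matrix.smul_apply, Matrix.map_apply, smul_eq_mul]
    have hAil : (U.map Polynomial.C + (Polynomial.X : R[X]) • V.map Polynomial.C) i l
        = Polynomial.C (U i l) + Polynomial.X * Polynomial.C (V i l) := by
      simp [Matrix.add_apply, Matrix.smul_apply, Matrix.map_apply, smul_eq_mul]
    rw [hBil, hAil, sub_mul, add_mul]
    rw [mul_assoc, mul_assoc]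
    rw [Polynomial.coeff_sub, Polynomial.coeff_add]
    rcases a with _ | a'
    · -- a = 0, b = n + 1
      have hb : b = n + 1 := by omega
      have hq0 : q.coeff b = 0 := by
        rw [hb]
        exact Polynomial.coeff_eq_zero_of_natDegree_lt (lt_of_le_of_lt (hdegA l j) (by omega))
      have hIH : p.coeff 0 = (-1 : R) ^ n * q.coeff n := ih 0 n (by omega) l j
      rw [hb]
      simp only [Polynomial.mul_coeff_zero, Polynomial.coeff_X_zero, zero_mul,
        Polynomial.coeff_X_mul, Polynomial.coeff_C_mul, Polynomial.coeff_C_zero, zero_sub, hIH]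
      have hq0' : q.coeff (n + 1) = 0 :=
        Polynomial.coeff_eq_zero_of_natDegree_lt (lt_of_le_of_lt (hdegA l j) (by omega))
      rw [hq0']
      ring
    · rcases b with _ | b'
      · -- b = 0, a' = n
        have ha : a' = n := by omega
        have hp0 : p.coeff (a' + 1) = 0 :=
          Polynomial.coeff_eq_zero_of_natDegree_lt (lt_of_le_of_lt (hdegB l j) (by omega))
        have hp0' : p.coeff (1 + a') = 0 := by rwa [Nat.add_comm]
        have hIH : p.coeff a' = (-1 : R) ^ 0 * q.coeff 0 := ih a' 0 (by omega) l j
        simp only [Polynomial.coeff_X_mul, Polynomial.coeff_C_mul, Polynomial.coeff_C_zero,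
          hp0, hp0', mul_zero, sub_zero, Polynomial.mul_coeff_zero, Polynomial.coeff_X_zero,
          zero_mul, hIH]
        ring
      · -- a = a' + 1, b = b' + 1
        have hIH1 : p.coeff a' = (-1 : R) ^ (b' + 1) * q.coeff (b' + 1) :=
          ih a' (b' + 1) (by omega) l j
        have hIH2 : p.coeff (a' + 1) = (-1 : R) ^ b' * q.coeff b' :=
          ih (a' + 1) b' (by omega) l j
        have hIH2' : p.coeff (1 + a') = (-1 : R) ^ b' * q.coeff b' := by
          rwa [Nat.add_comm]
        have hIH1' : q.coeff (1 + b') = q.coeff (b' + 1) := by rw [Nat.add_comm]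
        simp only [Polynomial.coeff_X_mul, Polynomial.coeff_C_mul, hIH1, hIH2, hIH2', hIH1']
        ring

end Aux

/-- For square matrices `U, V` over a commutative ring `R` and any `n ≥ 0`,
`∑_{j=0}^n (-1)^j (n-j)! [z^j] tr((U + z V)^n)` equals the result of taking
`tr((t U - V)^n)` as a polynomial in `t` and replacing each `t^k` by `k!`
(the series Laplace transform `L_{t,1}`). -/
theorem laplace_transform_trace {R : Type*} [CommRing R] {m : ℕ}
    (U V : Matrix (Fin m) (Fin m) R) (n : ℕ) :
    ∑ j ∈ Finset.range (n + 1),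
        (-1 : R) ^ j * (Nat.factorial (n - j) : R) *
          (Matrix.trace ((U.map Polynomial.C + (Polynomial.X : Polynomial R) • V.map Polynomial.C) ^ n)).coeff j =
      ∑ k ∈ Finset.range (n + 1),
        (Nat.factorial k : R) *
          (Matrix.trace (((Polynomial.X : Polynomial R) • U.map Polynomial.C - V.map Polynomial.C) ^ n)).coeff k := by
  have htr : ∀ k, k ≤ n →
      (Matrix.trace (((Polynomial.X : Polynomial R) • U.map Polynomial.C - V.map Polynomial.C) ^ n)).coeff k
        = (-1 : R) ^ (n - k) *
          (Matrix.trace ((U.map Polynomial.C + (Polynomial.X : Polynomial R) • V.map Polynomial.C) ^ n)).coeff (n - k) := by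
    intro k hk
    simp only [Matrix.trace, Matrix.diag, Polynomial.finset_sum_coeff, Finset.mul_sum]
    refine Finset.sum_congr rfl ?_
    intro i _
    exact key U V n k (n - k) (by omega) i i
  have hRHS : (∑ k ∈ Finset.range (n + 1),
        (Nat.factorial k : R) *
          (Matrix.trace (((Polynomial.X : Polynomial R) • U.map Polynomial.C - V.map Polynomial.C) ^ n)).coeff k)
      = ∑ k ∈ Finset.range (n + 1),
        (Nat.factorial k : R) * ((-1 : R) ^ (n - k) *
          (Matrix.trace ((U.map Polynomial.C + (Polynomial.X : Polynomial R) • V.map Polynomial.C) ^ n)).coeff (n - k)) :=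
    Finset.sum_congr rfl fun k hk => by
      rw [htr k (Nat.lt_succ_iff.mp (Finset.mem_range.mp hk))]
  rw [hRHS, ← Finset.sum_range_reflect]
  simp only [Nat.add_sub_cancel]
  refine Finset.sum_congr rfl ?_
  intro j hj
  have hj' : j ≤ n := Nat.lt_succ_iff.mp (Finset.mem_range.mp hj)
  have h1 : n - (n - j) = j := by omega
  rw [h1]
  ring
end

section
/- Let a, b, c, d be polynomials in one variable over a commutative ring with [z^0] c = 1. Then for every integer n ≥ 0, the coefficient of x^n y^n in the bivariate formal power series expansion of (a(xy) + b(xy)*(x + x*y^2)) / (c(xy) + d(xy)*(x + x*y^2)) equals the coefficient of p^n in (a(p)*d(p) - b(p)*c(p)) / (d(p) * sqrt(c(p)^2 - 4*p^2*d(p)^2)) + b(p)/d(p), where sqrt denotes the formal power series square root with constant term 1 and division by d(p) is formal (the combination is a well-defined power series). -/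
open PowerSeries Finset

/-- Evaluation of a univariate polynomial at the product `x*y` of the two variables of a
bivariate power series ring. -/
noncomputable def evalXY {K : Type*} [CommRing K] (f : Polynomial K) :
    MvPowerSeries (Fin 2) K :=
  Polynomial.eval₂ (MvPowerSeries.C (σ := Fin 2) (R := K))
    (MvPowerSeries.X 0 * MvPowerSeries.X 1) f

namespace DiagAux

variable {K : Type*} [CommRing K]

/-- the diagonal exponent `(n, n)` -/
noncomputable def dg (n : ℕ) : Fin 2 →₀ ℕ := Finsupp.single 0 n + Finsupp.single 1 n

lemma dg_apply0 (n : ℕ) : dg n 0 = n := by simp [dg, Finsupp.single_apply]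

lemma dg_apply1 (n : ℕ) : dg n 1 = n := by simp [dg, Finsupp.single_apply]

lemma fin2_ext {u v : Fin 2 →₀ ℕ} (h0 : u 0 = v 0) (h1 : u 1 = v 1) : u = v := by
  ext x
  fin_cases x
  · exact h0
  · exact h1

lemma eq_dg_iff {m : Fin 2 →₀ ℕ} {n : ℕ} : m = dg n ↔ m 0 = n ∧ m 1 = n := by
  constructor
  · rintro rfl; exact ⟨dg_apply0 n, dg_apply1 n⟩
  · rintro ⟨h0, h1⟩; exact fin2_ext (by rw [h0, dg_apply0]) (by rw [h1, dg_apply1])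

/-- substitution `X ↦ X 0 * X 1` into a univariate power series -/
noncomputable def eps (g : PowerSeries K) : MvPowerSeries (Fin 2) K :=
  fun m => if m 0 = m 1 then PowerSeries.coeff (m 0) g else 0

lemma coeff_eps (m : Fin 2 →₀ ℕ) (g : PowerSeries K) :
    MvPowerSeries.coeff m (eps g) = if m 0 = m 1 then PowerSeries.coeff (m 0) g else 0 :=
  MvPowerSeries.coeff_apply (eps g) m

lemma coeff_dg_eps (n : ℕ) (g : PowerSeries K) :
    MvPowerSeries.coeff (dg n) (eps g) = PowerSeries.coeff n g := by
  rw [coeff_eps, dg_apply0, dg_apply1, if_pos rfl]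

lemma eps_add (f g : PowerSeries K) : eps (f + g) = eps f + eps g := by
  apply MvPowerSeries.ext; intro m
  rw [map_add, coeff_eps, coeff_eps, coeff_eps, map_add]
  split_ifs <;> simp

lemma eps_one : (eps 1 : MvPowerSeries (Fin 2) K) = 1 := by
  apply MvPowerSeries.ext; intro m
  rw [coeff_eps, MvPowerSeries.coeff_one, PowerSeries.coeff_one]
  by_cases h : m = 0
  · subst h; simp
  · rw [if_neg h]
    split_ifs with h1 h2
    · exfalso; apply h; apply fin2_ext <;> simp [h2, h1.symm.trans h2]
    · rfl
    · rfl

lemma eps_mul (f g : PowerSeries K) : eps (f * g) = eps f * eps g := by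
  classical
  apply MvPowerSeries.ext; intro m
  rw [MvPowerSeries.coeff_mul, coeff_eps]
  by_cases hm : m 0 = m 1
  · rw [if_pos hm, PowerSeries.coeff_mul]
    refine (Finset.sum_bij_ne_zero (fun p _ _ => (p.1 0, p.2 0)) ?_ ?_ ?_ ?_).symm
    · rintro ⟨p1, p2⟩ hp hne
      rw [Finset.HasAntidiagonal.mem_antidiagonal] at hp
      rw [Finset.HasAntidiagonal.mem_antidiagonal]
      have := congrArg (fun u => u 0) hp
      simpa using this
    · rintro ⟨p1, p2⟩ h1 hne ⟨q1, q2⟩ h2 hne2 heq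
      rw [Finset.HasAntidiagonal.mem_antidiagonal] at h1 h2
      simp only [Prod.mk.injEq] at heq
      have d1 : p1 0 = p1 1 := by
        by_contra hcon
        apply hne; rw [coeff_eps, if_neg hcon, zero_mul]
      have d2 : p2 0 = p2 1 := by
        by_contra hcon
        apply hne; rw [coeff_eps (m := p2), if_neg hcon, mul_zero]
      have e1 : q1 0 = q1 1 := by
        by_contra hcon
        apply hne2; rw [coeff_eps, if_neg hcon, zero_mul]
      have e2 : q2 0 = q2 1 := by
        by_contra hcon
        apply hne2; rw [coeff_eps (m := q2), if_neg hcon, mul_zero]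
      have hp1 : p1 = q1 := fin2_ext heq.1 (by rw [← d1, ← e1, heq.1])
      have hp2 : p2 = q2 := fin2_ext heq.2 (by rw [← d2, ← e2, heq.2])
      exact Prod.ext hp1 hp2
    · rintro ⟨i, j⟩ hij hne
      rw [Finset.HasAntidiagonal.mem_antidiagonal] at hij
      refine ⟨(dg i, dg j), ?_, ?_, ?_⟩
      · rw [Finset.HasAntidiagonal.mem_antidiagonal]
        apply fin2_ext <;> simp [dg_apply0, dg_apply1, hij, hm.symm]
      · rw [coeff_eps, coeff_eps, dg_apply0, dg_apply0, dg_apply1, dg_apply1,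
          if_pos rfl, if_pos rfl]
        exact hne
      · simp [dg_apply0]
    · rintro ⟨p1, p2⟩ hp hne
      rw [Finset.HasAntidiagonal.mem_antidiagonal] at hp
      have d1 : p1 0 = p1 1 := by
        by_contra hcon
        apply hne; rw [coeff_eps, if_neg hcon, zero_mul]
      have d2 : p2 0 = p2 1 := by
        by_contra hcon
        apply hne; rw [coeff_eps (m := p2), if_neg hcon, mul_zero]
      rw [coeff_eps, coeff_eps, if_pos d1, if_pos d2]
  · rw [if_neg hm]
    symm
    apply Finset.sum_eq_zero
    rintro ⟨p1, p2⟩ hp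
    rw [Finset.HasAntidiagonal.mem_antidiagonal] at hp
    by_cases d1 : p1 0 = p1 1
    · by_cases d2 : p2 0 = p2 1
      · exfalso
        apply hm
        have h0 := congrArg (fun u => u 0) hp
        have h1 := congrArg (fun u => u 1) hp
        simp only [Finsupp.add_apply] at h0 h1
        rw [← h0, ← h1, d1, d2]
      · rw [coeff_eps (m := p2), if_neg d2, mul_zero]
    · rw [coeff_eps, if_neg d1, zero_mul]

lemma eps_C (k : K) : eps (PowerSeries.C k) = MvPowerSeries.C k := by
  apply MvPowerSeries.ext; intro m
  rw [coeff_eps, MvPowerSeries.coeff_C, PowerSeries.coeff_C]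
  by_cases h : m = 0
  · subst h; simp
  · rw [if_neg h]
    split_ifs with h1 h2
    · exfalso; apply h; apply fin2_ext <;> simp [h2, h1.symm.trans h2]
    · rfl
    · rfl

lemma eps_X : (eps PowerSeries.X : MvPowerSeries (Fin 2) K) =
    MvPowerSeries.X 0 * MvPowerSeries.X 1 := by
  apply MvPowerSeries.ext; intro m
  rw [coeff_eps]
  have : (MvPowerSeries.X 0 * MvPowerSeries.X 1 : MvPowerSeries (Fin 2) K) =
      MvPowerSeries.monomial (dg 1) 1 := by
    rw [MvPowerSeries.X, MvPowerSeries.X, MvPowerSeries.monomial_mul_monomial, one_mul, dg]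
  rw [this, MvPowerSeries.coeff_monomial, PowerSeries.coeff_X]
  by_cases h : m = dg 1
  · subst h; simp [dg_apply0, dg_apply1]
  · rw [if_neg h]
    split_ifs with h1 h2
    · exact absurd (eq_dg_iff.mpr ⟨h2, h1.symm.trans h2⟩) h
    · rfl
    · rfl

/-- `eps` as a ring homomorphism. -/
noncomputable def epsHom : PowerSeries K →+* MvPowerSeries (Fin 2) K where
  toFun := eps
  map_one' := eps_one
  map_mul' := eps_mul
  map_zero' := by
    apply MvPowerSeries.ext; intro m
    rw [coeff_eps]; simp
  map_add' := eps_add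

lemma epsHom_apply (g : PowerSeries K) : epsHom g = eps g := rfl

lemma eps_coe (f : Polynomial K) : eps (f : PowerSeries K) = evalXY f := by
  induction f using Polynomial.induction_on with
  | C a => rw [Polynomial.coe_C, eps_C, evalXY, Polynomial.eval₂_C]
  | add p q hp hq =>
      simp only [evalXY, Polynomial.eval₂_add] at *
      rw [Polynomial.coe_add, eps_add, hp, hq]
  | monomial n a ih =>
      simp only [evalXY, Polynomial.eval₂_mul, Polynomial.eval₂_C, Polynomial.eval₂_X_pow]
      rw [Polynomial.coe_mul, Polynomial.coe_pow, Polynomial.coe_C, Polynomial.coe_X,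
        eps_mul, eps_C]
      congr 1
      rw [← epsHom_apply, map_pow, epsHom_apply, eps_X]

/-- Diagonal of a bivariate power series. -/
noncomputable def diagPS (F : MvPowerSeries (Fin 2) K) : PowerSeries K :=
  PowerSeries.mk fun n => MvPowerSeries.coeff (dg n) F

lemma coeff_diag (n : ℕ) (F : MvPowerSeries (Fin 2) K) :
    PowerSeries.coeff n (diagPS F) = MvPowerSeries.coeff (dg n) F :=
  PowerSeries.coeff_mk _ _

lemma diag_add (F G : MvPowerSeries (Fin 2) K) : diagPS (F + G) = diagPS F + diagPS G := by
  apply PowerSeries.ext; intro n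
  rw [map_add, coeff_diag, coeff_diag, coeff_diag, map_add]

lemma diag_one : (diagPS 1 : PowerSeries K) = 1 := by
  apply PowerSeries.ext; intro n
  rw [coeff_diag, MvPowerSeries.coeff_one, PowerSeries.coeff_one]
  by_cases h : n = 0
  · subst h; rw [if_pos rfl, if_pos]; apply fin2_ext <;> simp [dg_apply0, dg_apply1]
  · rw [if_neg h, if_neg]
    intro hcon
    exact h (by simpa [dg_apply0] using congrArg (fun u => u 0) hcon)

lemma diag_eps_mul (g : PowerSeries K) (F : MvPowerSeries (Fin 2) K) :
    diagPS (eps g * F) = g * diagPS F := by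
  classical
  apply PowerSeries.ext; intro n
  rw [coeff_diag, MvPowerSeries.coeff_mul, PowerSeries.coeff_mul]
  refine Finset.sum_bij_ne_zero (fun p _ _ => (p.1 0, p.2 0)) ?_ ?_ ?_ ?_
  · rintro ⟨p1, p2⟩ hp hne
    rw [Finset.HasAntidiagonal.mem_antidiagonal] at hp
    rw [Finset.HasAntidiagonal.mem_antidiagonal]
    have := congrArg (fun u => u 0) hp
    simpa [dg_apply0] using this
  · rintro ⟨p1, p2⟩ h1 hne ⟨q1, q2⟩ h2 hne2 heq
    rw [Finset.HasAntidiagonal.mem_antidiagonal] at h1 h2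
    simp only [Prod.mk.injEq] at heq
    have d1 : p1 0 = p1 1 := by
      by_contra hcon
      apply hne; rw [coeff_eps, if_neg hcon, zero_mul]
    have e1 : q1 0 = q1 1 := by
      by_contra hcon
      apply hne2; rw [coeff_eps, if_neg hcon, zero_mul]
    have hp1 : p1 = q1 := fin2_ext heq.1 (by rw [← d1, ← e1, heq.1])
    refine Prod.ext hp1 ?_
    have : p1 + p2 = q1 + q2 := h1.trans h2.symm
    rw [hp1] at this
    exact add_left_cancel this
  · rintro ⟨i, j⟩ hij hne
    rw [Finset.HasAntidiagonal.mem_antidiagonal] at hij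
    refine ⟨(dg i, dg j), ?_, ?_, ?_⟩
    · rw [Finset.HasAntidiagonal.mem_antidiagonal]
      apply fin2_ext <;> simp [dg_apply0, dg_apply1, hij]
    · rw [coeff_dg_eps]
      intro hcon
      apply hne
      rw [coeff_diag] at *
      exact hcon
    · simp [dg_apply0]
  · rintro ⟨p1, p2⟩ hp hne
    rw [Finset.HasAntidiagonal.mem_antidiagonal] at hp
    have d1 : p1 0 = p1 1 := by
      by_contra hcon
      apply hne; rw [coeff_eps, if_neg hcon, zero_mul]
    have hdg1 : p1 = dg (p1 0) := eq_dg_iff.mpr ⟨rfl, d1.symm⟩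
    have h0 := congrArg (fun u => u 0) hp
    have h1 := congrArg (fun u => u 1) hp
    simp only [Finsupp.add_apply, dg_apply0, dg_apply1] at h0 h1
    have d2 : p2 0 = p2 1 := by omega
    have hdg2 : p2 = dg (p2 0) := eq_dg_iff.mpr ⟨rfl, d2.symm⟩
    simp only
    rw [coeff_eps, if_pos d1, coeff_diag, ← hdg2]

lemma geom_trunc (Q A : MvPowerSeries (Fin 2) K) (hA : (1 - Q) * A = 1) (M : ℕ) :
    A = (∑ k ∈ Finset.range M, Q ^ k) + Q ^ M * A := by
  induction M with
  | zero => simp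
  | succ M ih =>
      have hstep : A = 1 + Q * A := by
        have : A - Q * A = 1 := by rw [← hA]; ring
        rw [← this]; ring
      calc A = (∑ k ∈ Finset.range M, Q ^ k) + Q ^ M * A := ih
        _ = (∑ k ∈ Finset.range M, Q ^ k) + Q ^ M * (1 + Q * A) := by rw [← hstep]
        _ = (∑ k ∈ Finset.range (M + 1), Q ^ k) + Q ^ (M + 1) * A := by
            rw [Finset.sum_range_succ]; ring

lemma coeff_X0_pow_mul_eq_zero (F : MvPowerSeries (Fin 2) K) (k : ℕ) (m : Fin 2 →₀ ℕ)
    (h : m 0 < k) : MvPowerSeries.coeff m ((MvPowerSeries.X 0) ^ k * F) = 0 := by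
  rw [MvPowerSeries.X_pow_eq, MvPowerSeries.coeff_monomial_mul, if_neg]
  intro hcon
  have := hcon 0
  simp [Finsupp.single_apply] at this
  omega

/-- coefficients of `(1 - X 0 * eps g)⁻¹` on the diagonal -/
lemma diag_coeff_inv_one_sub_Z (g : PowerSeries K) (A : MvPowerSeries (Fin 2) K)
    (hA : (1 - MvPowerSeries.X 0 * eps g) * A = 1) (n : ℕ) :
    MvPowerSeries.coeff (dg n) A = if n = 0 then 1 else 0 := by
  set Q : MvPowerSeries (Fin 2) K := MvPowerSeries.X 0 * eps g with hQ
  have hQk : ∀ k : ℕ, Q ^ k = (MvPowerSeries.X 0) ^ k * eps (g ^ k) := by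
    intro k
    rw [hQ, mul_pow, ← epsHom_apply, ← map_pow, epsHom_apply]
  rw [geom_trunc Q A hA (n + 1), map_add, map_sum]
  have tail : MvPowerSeries.coeff (dg n) (Q ^ (n + 1) * A) = 0 := by
    rw [hQk, mul_assoc]
    exact coeff_X0_pow_mul_eq_zero _ _ _ (by rw [dg_apply0]; omega)
  rw [tail, add_zero]
  have terms : ∀ k ∈ Finset.range (n + 1),
      MvPowerSeries.coeff (dg n) (Q ^ k) = if k = 0 then (if n = 0 then 1 else 0) else 0 := by
    intro k hk
    rw [Finset.mem_range] at hk
    rcases Nat.eq_zero_or_pos k with hk0 | hkpos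
    · subst hk0
      rw [if_pos rfl, pow_zero, MvPowerSeries.coeff_one]
      by_cases hn : n = 0
      · subst hn; rw [if_pos rfl, if_pos]; apply fin2_ext <;> simp [dg_apply0, dg_apply1]
      · rw [if_neg hn, if_neg]
        intro hcon
        exact hn (by simpa [dg_apply0] using congrArg (fun u => u 0) hcon)
    · rw [if_neg (by omega), hQk, MvPowerSeries.X_pow_eq, MvPowerSeries.coeff_monomial_mul]
      by_cases hle : Finsupp.single (0 : Fin 2) k ≤ dg n
      · rw [if_pos hle, one_mul, coeff_eps, if_neg, ]
        have h0 : (dg n - Finsupp.single (0 : Fin 2) k) 0 = n - k := by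
          rw [Finsupp.tsub_apply, dg_apply0, Finsupp.single_apply, if_pos rfl]
        have h1 : (dg n - Finsupp.single (0 : Fin 2) k) 1 = n := by
          rw [Finsupp.tsub_apply, dg_apply1]
          simp [Finsupp.single_apply]
        have hkn : k ≤ n := by
          have := hle 0
          rw [Finsupp.single_apply, if_pos rfl, dg_apply0] at this
          exact this
        rw [h0, h1]
        omega
      · rw [if_neg hle]
  rw [Finset.sum_congr rfl terms, Finset.sum_ite_eq' (Finset.range (n + 1)) 0,
    if_pos (by simp)]

/-- diagonal coefficients of `W * (1 - W)⁻¹` vanish, where `W = X 0 * X 1 ^ 2 * eps g`. -/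
lemma diag_coeff_W_inv_one_sub_W (g : PowerSeries K) (B : MvPowerSeries (Fin 2) K)
    (hB : (1 - MvPowerSeries.X 0 * MvPowerSeries.X 1 ^ 2 * eps g) * B = 1) (n : ℕ) :
    MvPowerSeries.coeff (dg n)
      ((MvPowerSeries.X 0 * MvPowerSeries.X 1 ^ 2 * eps g) * B) = 0 := by
  set W : MvPowerSeries (Fin 2) K := MvPowerSeries.X 0 * MvPowerSeries.X 1 ^ 2 * eps g with hW
  have hWk : ∀ k : ℕ, W ^ k =
      MvPowerSeries.monomial (Finsupp.single (0 : Fin 2) k + Finsupp.single (1 : Fin 2) (2 * k)) 1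
        * eps (g ^ k) := by
    intro k
    rw [hW, mul_pow, mul_pow, ← epsHom_apply, ← map_pow, epsHom_apply,
      MvPowerSeries.X_pow_eq, ← pow_mul, MvPowerSeries.X_pow_eq,
      MvPowerSeries.monomial_mul_monomial, one_mul]
  have key : ∀ k : ℕ, 1 ≤ k → MvPowerSeries.coeff (dg n) (W ^ k) = 0 := by
    intro k hk
    rw [hWk, MvPowerSeries.coeff_monomial_mul]
    set sk : Fin 2 →₀ ℕ :=
      Finsupp.single (0 : Fin 2) k + Finsupp.single (1 : Fin 2) (2 * k) with hsk
    by_cases hle : sk ≤ dg n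
    · rw [if_pos hle, one_mul, coeff_eps, if_neg]
      have hsk0 : sk 0 = k := by
        rw [hsk]; simp [Finsupp.single_apply]
      have hsk1 : sk 1 = 2 * k := by
        rw [hsk]; simp [Finsupp.single_apply]
      have hk2 : 2 * k ≤ n := by
        have := hle 1
        rw [hsk1, dg_apply1] at this
        exact this
      have h0 : (dg n - sk) 0 = n - k := by
        rw [Finsupp.tsub_apply, dg_apply0, hsk0]
      have h1 : (dg n - sk) 1 = n - 2 * k := by
        rw [Finsupp.tsub_apply, dg_apply1, hsk1]
      rw [h0, h1]
      omega
    · rw [if_neg hle]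
  rw [show W * B = W ^ (n + 1) * B + (W * B - W ^ (n + 1) * B) by ring, map_add]
  have tail : MvPowerSeries.coeff (dg n) (W ^ (n + 1) * B) = 0 := by
    rw [hWk, mul_assoc, MvPowerSeries.coeff_monomial_mul, if_neg]
    intro hcon
    have := hcon 0
    simp [Finsupp.single_apply, dg_apply0] at this
  rw [tail, zero_add]
  have hsub : B - W ^ n * B = ∑ k ∈ Finset.range n, W ^ k := by
    linear_combination geom_trunc W B hB n
  have expand : W * B - W ^ (n + 1) * B = ∑ k ∈ Finset.range n, W ^ (k + 1) := by
    calc W * B - W ^ (n + 1) * B = W * (B - W ^ n * B) := by ring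
      _ = W * (∑ k ∈ Finset.range n, W ^ k) := by rw [hsub]
      _ = ∑ k ∈ Finset.range n, W ^ (k + 1) := by
          rw [Finset.mul_sum]
          exact Finset.sum_congr rfl fun k _ => by ring
  rw [expand, map_sum]
  apply Finset.sum_eq_zero
  intro k _
  exact key (k + 1) (by omega)

/-- coefficients of the solution of `r = g + X^2 * (g * r^2)` -/
noncomputable def rho (g : PowerSeries K) : ℕ → K
  | n =>
    PowerSeries.coeff n g +
      if h : 2 ≤ n then
        ∑ p ∈ (Finset.HasAntidiagonal.antidiagonal (n - 2)).attach,
          PowerSeries.coeff p.1.1 g *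
            ∑ q ∈ (Finset.HasAntidiagonal.antidiagonal p.1.2).attach,
              rho g q.1.1 * rho g q.1.2
      else 0
  decreasing_by
  · have hq := Finset.HasAntidiagonal.mem_antidiagonal.mp q.2
    have hp := Finset.HasAntidiagonal.mem_antidiagonal.mp p.2
    omega
  · have hq := Finset.HasAntidiagonal.mem_antidiagonal.mp q.2
    have hp := Finset.HasAntidiagonal.mem_antidiagonal.mp p.2
    omega

lemma rho_spec (g : PowerSeries K) :
    PowerSeries.mk (rho g) = g + PowerSeries.X ^ 2 * (g * PowerSeries.mk (rho g) ^ 2) := by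
  apply PowerSeries.ext; intro n
  rw [map_add, PowerSeries.coeff_mk, rho]
  congr 1
  rw [mul_comm (PowerSeries.X ^ 2 : PowerSeries K), PowerSeries.coeff_mul_X_pow']
  by_cases h : 2 ≤ n
  · rw [if_pos h, dif_pos h, PowerSeries.coeff_mul]
    rw [Finset.sum_attach (Finset.HasAntidiagonal.antidiagonal (n - 2))
      (fun p => PowerSeries.coeff p.1 g *
        ∑ q ∈ (Finset.HasAntidiagonal.antidiagonal p.2).attach, rho g q.1.1 * rho g q.1.2)]
    apply Finset.sum_congr rfl
    rintro ⟨u, v⟩ _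
    congr 1
    rw [Finset.sum_attach (Finset.HasAntidiagonal.antidiagonal v) (fun q => rho g q.1 * rho g q.2)]
    rw [sq, PowerSeries.coeff_mul]
    apply Finset.sum_congr rfl
    rintro ⟨i, j⟩ _
    rw [PowerSeries.coeff_mk, PowerSeries.coeff_mk]
  · rw [if_neg (by omega), dif_neg h]

/-- uniqueness of square roots with constant coefficient 1 -/
lemma sq_eq_sq_of {K : Type*} [CommRing K] [IsDomain K] {A B : PowerSeries K}
    (h : A ^ 2 = B ^ 2) (hA : PowerSeries.constantCoeff A = 1)
    (hB : PowerSeries.constantCoeff B = 1) : A = B := by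
  have hfac : (A - B) * (A + B) = 0 := by linear_combination h
  rcases mul_eq_zero.mp hfac with h1 | h2
  · exact sub_eq_zero.mp h1
  · have h2K : (1 : K) + 1 = 0 := by
      have := congrArg (PowerSeries.constantCoeff) h2
      simpa [hA, hB] using this
    have hAB : A = -B := eq_neg_of_add_eq_zero_left h2
    have hBB : B + B = 0 := by
      calc B + B = PowerSeries.C ((1 : K) + 1) * B := by rw [map_add, map_one]; ring
        _ = 0 := by rw [h2K, map_zero, zero_mul]
    rw [hAB]
    linear_combination -hBB

end DiagAux

open DiagAux

/-- Diagonal extraction lemma: let `a, b, c, d` be polynomials with `[z^0] c = 1` over a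
domain, with `d ≠ 0`.  Let `Dinv` be the (bivariate) inverse of `c(xy) + d(xy)(x + x y^2)`,
let `S` be the formal square root of `c(p)^2 - 4 p^2 d(p)^2` with constant term `1`, and let
`H` be the well-defined power series `(a d - b c)/(d S) + b/d`, i.e. `d S H = a d - b c + b S`.
Then the coefficient of `x^n y^n` in `(a(xy) + b(xy)(x + x y^2)) * Dinv` equals the
coefficient of `p^n` in `H`. -/
theorem diagonal_extraction {K : Type*} [CommRing K] [IsDomain K]
    (a b c d : Polynomial K) (hc : c.coeff 0 = 1) (hd : d ≠ 0) (n : ℕ)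
    (Dinv : MvPowerSeries (Fin 2) K) (S H : PowerSeries K)
    (hDinv : (evalXY c + evalXY d * (MvPowerSeries.X 0 + MvPowerSeries.X 0 * MvPowerSeries.X 1 ^ 2)) * Dinv = 1)
    (hS1 : PowerSeries.constantCoeff (R := K) S = 1)
    (hS : S ^ 2 = (c : PowerSeries K) ^ 2 - 4 * PowerSeries.X ^ 2 * (d : PowerSeries K) ^ 2)
    (hH : (d : PowerSeries K) * S * H =
      ((a : PowerSeries K) * (d : PowerSeries K) - (b : PowerSeries K) * (c : PowerSeries K)) +
        (b : PowerSeries K) * S) :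
    MvPowerSeries.coeff (R := K) (Finsupp.single 0 n + Finsupp.single 1 n)
        ((evalXY a + evalXY b * (MvPowerSeries.X 0 + MvPowerSeries.X 0 * MvPowerSeries.X 1 ^ 2)) * Dinv) =
      PowerSeries.coeff (R := K) n H := by
  classical
  set X0 : MvPowerSeries (Fin 2) K := MvPowerSeries.X 0 with hX0
  set X1 : MvPowerSeries (Fin 2) K := MvPowerSeries.X 1 with hX1
  -- constant coefficient of c is 1, so c is invertible
  have hc1 : PowerSeries.constantCoeff (c : PowerSeries K) = 1 := by
    rw [← PowerSeries.coeff_zero_eq_constantCoeff_apply, Polynomial.coeff_coe, hc]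
  set ci : PowerSeries K := PowerSeries.invOfUnit (c : PowerSeries K) 1 with hcidef
  have hci : (c : PowerSeries K) * ci = 1 :=
    PowerSeries.mul_invOfUnit _ _ (by rw [hc1]; rfl)
  set g : PowerSeries K := -(ci * (d : PowerSeries K)) with hgdef
  set r : PowerSeries K := PowerSeries.mk (rho g) with hrdef
  have hr : r = g + PowerSeries.X ^ 2 * (g * r ^ 2) := rho_spec g
  -- R1 : c * r = -(d * (1 + X^2 r^2))
  have R1 : (c : PowerSeries K) * r + (d : PowerSeries K) * (1 + PowerSeries.X ^ 2 * r ^ 2) = 0 := by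
    linear_combination (c : PowerSeries K) * hr -
      ((d : PowerSeries K) + PowerSeries.X ^ 2 * r ^ 2 * (d : PowerSeries K)) * hci
  set ξ : PowerSeries K := PowerSeries.X ^ 2 * r ^ 2 with hxidef
  have hxi0 : PowerSeries.constantCoeff ξ = 0 := by
    rw [hxidef]
    simp [map_mul, map_pow]
  -- R2
  have R2 : S * (1 + ξ) = (c : PowerSeries K) * (1 - ξ) := by
    apply sq_eq_sq_of
    · linear_combination ((1 + ξ) ^ 2) * hS +
        (4 * PowerSeries.X ^ 2 * ((c : PowerSeries K) * r - (d : PowerSeries K) * (1 + ξ))) * R1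
    · rw [map_mul, hS1, map_add, map_one, hxi0, add_zero, one_mul]
    · rw [map_mul, hc1, map_sub, map_one, hxi0, sub_zero, one_mul]
  -- R3
  have hone_xi_ne : (1 + ξ : PowerSeries K) ≠ 0 := by
    intro hcon
    have := congrArg (PowerSeries.constantCoeff) hcon
    rw [map_add, map_one, hxi0, add_zero, map_zero] at this
    exact one_ne_zero this
  have R3 : S * r = -((d : PowerSeries K) * (1 - ξ)) := by
    apply mul_left_cancel₀ hone_xi_ne
    linear_combination r * R2 + (1 - ξ) * R1
  -- bivariate objects
  set Z : MvPowerSeries (Fin 2) K := X0 * eps r with hZdef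
  set W : MvPowerSeries (Fin 2) K := X0 * X1 ^ 2 * eps r with hWdef
  set u0 : MvPowerSeries (Fin 2) K := X0 + X0 * X1 ^ 2 with hu0def
  set DD : MvPowerSeries (Fin 2) K := evalXY c + evalXY d * u0 with hDDdef
  set NN : MvPowerSeries (Fin 2) K := evalXY a + evalXY b * u0 with hNNdef
  have hxx : eps (PowerSeries.X : PowerSeries K) = X0 * X1 := eps_X
  -- atomized versions of R2, R3
  have hxi_eps : eps (1 - ξ) = 1 - (X0 * X1) ^ 2 * (eps r) ^ 2 := by
    rw [hxidef, ← epsHom_apply, map_sub, map_one, map_mul, map_pow, map_pow,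
      epsHom_apply, epsHom_apply, hxx]
  have m1 : eps S * (1 + (X0 * X1) ^ 2 * (eps r) ^ 2) =
      evalXY c * (1 - (X0 * X1) ^ 2 * (eps r) ^ 2) := by
    have h := congrArg epsHom R2
    simp only [hxidef, map_mul, map_add, map_sub, map_one, map_pow, epsHom_apply,
      eps_X, eps_coe] at h
    exact h
  have m2 : eps S * eps r = -(evalXY d * (1 - (X0 * X1) ^ 2 * (eps r) ^ 2)) := by
    have h := congrArg epsHom R3
    simp only [hxidef, map_mul, map_add, map_sub, map_neg, map_one, map_pow, epsHom_apply,
      eps_X, eps_coe] at h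
    exact h
  -- the key factorization identity
  have KEY : eps S * ((1 - Z) * (1 - W)) = DD * eps (1 - ξ) := by
    rw [hxi_eps, hZdef, hWdef, hDDdef, hu0def]
    linear_combination m1 - (X0 + X0 * X1 ^ 2) * m2
  -- inverses of the two units
  have hZ0 : MvPowerSeries.constantCoeff (1 - Z) = 1 := by
    rw [hZdef, map_sub, map_one, map_mul, hX0, MvPowerSeries.constantCoeff_X, zero_mul, sub_zero]
  have hW0 : MvPowerSeries.constantCoeff (1 - W) = 1 := by
    rw [hWdef, map_sub, map_one, map_mul, map_mul, hX0, MvPowerSeries.constantCoeff_X,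
      zero_mul, zero_mul, sub_zero]
  set zi : MvPowerSeries (Fin 2) K := MvPowerSeries.invOfUnit (1 - Z) 1 with hzidef
  set wi : MvPowerSeries (Fin 2) K := MvPowerSeries.invOfUnit (1 - W) 1 with hwidef
  have hzi : (1 - Z) * zi = 1 := MvPowerSeries.mul_invOfUnit _ _ (by rw [hZ0]; rfl)
  have hwi : (1 - W) * wi = 1 := MvPowerSeries.mul_invOfUnit _ _ (by rw [hW0]; rfl)
  have hZW_ne : ((1 - Z) * (1 - W) : MvPowerSeries (Fin 2) K) ≠ 0 := by
    intro hcon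
    have := congrArg (MvPowerSeries.constantCoeff) hcon
    rw [map_mul, hZ0, hW0, one_mul, map_zero] at this
    exact one_ne_zero this
  -- eps S * Dinv = zi + W * wi
  have ESD : eps S * Dinv = zi + W * wi := by
    apply mul_right_cancel₀ hZW_ne
    have h1 : (eps S * Dinv) * ((1 - Z) * (1 - W)) = eps (1 - ξ) := by
      calc (eps S * Dinv) * ((1 - Z) * (1 - W))
          = (eps S * ((1 - Z) * (1 - W))) * Dinv := by ring
        _ = (DD * eps (1 - ξ)) * Dinv := by rw [KEY]
        _ = eps (1 - ξ) * (DD * Dinv) := by ring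
        _ = eps (1 - ξ) := by rw [hDDdef, hu0def, hX0, hX1, hDinv, mul_one]
    have h2 : (zi + W * wi) * ((1 - Z) * (1 - W)) = eps (1 - ξ) := by
      have hzw : Z * W = (X0 * X1) ^ 2 * (eps r) ^ 2 := by
        rw [hZdef, hWdef]; ring
      calc (zi + W * wi) * ((1 - Z) * (1 - W))
          = ((1 - Z) * zi) * (1 - W) + (W * (1 - Z)) * ((1 - W) * wi) := by ring
        _ = (1 - W) + W * (1 - Z) := by rw [hzi, hwi]; ring
        _ = 1 - Z * W := by ring
        _ = eps (1 - ξ) := by rw [hxi_eps, hzw]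
    rw [h1, h2]
  -- diagonal of eps S * Dinv is 1
  have hdiag1 : diagPS (eps S * Dinv) = 1 := by
    rw [ESD]
    apply PowerSeries.ext; intro k
    rw [coeff_diag, map_add, PowerSeries.coeff_one]
    rw [diag_coeff_inv_one_sub_Z r zi (by rw [← hZdef]; exact hzi) k]
    rw [diag_coeff_W_inv_one_sub_W r wi (by rw [← hWdef]; exact hwi) k]
    rw [add_zero]
  have Sdiag : S * diagPS Dinv = 1 := by
    rw [← diag_eps_mul S Dinv, hdiag1]
  -- step A: reduce the numerator
  have hbiv : eps ((d : PowerSeries K)) * (NN * Dinv) =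
      eps ((b : PowerSeries K)) +
        eps ((a : PowerSeries K) * (d : PowerSeries K)
          - (b : PowerSeries K) * (c : PowerSeries K)) * Dinv := by
    have hpoly : evalXY d * NN = evalXY b * DD +
        (evalXY a * evalXY d - evalXY b * evalXY c) := by
      rw [hNNdef, hDDdef]; ring
    have hcast : eps ((a : PowerSeries K) * (d : PowerSeries K)
        - (b : PowerSeries K) * (c : PowerSeries K))
        = evalXY a * evalXY d - evalXY b * evalXY c := by
      rw [← epsHom_apply, map_sub, map_mul, map_mul]
      simp only [epsHom_apply, eps_coe]
    rw [eps_coe, eps_coe, hcast]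
    calc evalXY d * (NN * Dinv) = (evalXY d * NN) * Dinv := by ring
      _ = (evalXY b * DD + (evalXY a * evalXY d - evalXY b * evalXY c)) * Dinv := by rw [hpoly]
      _ = evalXY b * (DD * Dinv) + (evalXY a * evalXY d - evalXY b * evalXY c) * Dinv := by ring
      _ = evalXY b + (evalXY a * evalXY d - evalXY b * evalXY c) * Dinv := by
          rw [hDDdef, hu0def, hX0, hX1, hDinv, mul_one]
  have stepA : (d : PowerSeries K) * diagPS (NN * Dinv) =
      (b : PowerSeries K) +
        ((a : PowerSeries K) * (d : PowerSeries K)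
          - (b : PowerSeries K) * (c : PowerSeries K)) * diagPS Dinv := by
    calc (d : PowerSeries K) * diagPS (NN * Dinv) = diagPS (eps (d : PowerSeries K) * (NN * Dinv)) :=
          (diag_eps_mul _ _).symm
      _ = diagPS (eps ((b : PowerSeries K)) * 1 +
            eps ((a : PowerSeries K) * (d : PowerSeries K)
              - (b : PowerSeries K) * (c : PowerSeries K)) * Dinv) := by rw [hbiv, mul_one]
      _ = (b : PowerSeries K) * diagPS 1 +
            ((a : PowerSeries K) * (d : PowerSeries K)
              - (b : PowerSeries K) * (c : PowerSeries K)) * diagPS Dinv := by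
          rw [diag_add, diag_eps_mul, diag_eps_mul]
      _ = _ := by rw [diag_one, mul_one]
  -- conclude
  have hdne : ((d : PowerSeries K)) ≠ 0 := by
    rw [Ne, Polynomial.coe_eq_zero_iff]
    exact hd
  have hSne : S ≠ 0 := by
    intro hcon
    rw [hcon, map_zero] at hS1
    exact one_ne_zero hS1.symm
  have hdSne : ((d : PowerSeries K) * S) ≠ 0 := mul_ne_zero hdne hSne
  have final : ((d : PowerSeries K) * S) * diagPS (NN * Dinv) = ((d : PowerSeries K) * S) * H := by
    calc ((d : PowerSeries K) * S) * diagPS (NN * Dinv)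
        = S * ((d : PowerSeries K) * diagPS (NN * Dinv)) := by ring
      _ = S * ((b : PowerSeries K) +
            ((a : PowerSeries K) * (d : PowerSeries K)
              - (b : PowerSeries K) * (c : PowerSeries K)) * diagPS Dinv) := by rw [stepA]
      _ = (b : PowerSeries K) * S +
            ((a : PowerSeries K) * (d : PowerSeries K)
              - (b : PowerSeries K) * (c : PowerSeries K)) * (S * diagPS Dinv) := by ring
      _ = (b : PowerSeries K) * S +
            ((a : PowerSeries K) * (d : PowerSeries K)
              - (b : PowerSeries K) * (c : PowerSeries K)) * 1 := by rw [Sdiag]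
      _ = ((d : PowerSeries K) * S) * H := by rw [hH]; ring
  have hfin : diagPS (NN * Dinv) = H := mul_left_cancel₀ hdSne final
  have := congrArg (PowerSeries.coeff n) hfin
  rw [coeff_diag] at this
  rw [show (Finsupp.single (0 : Fin 2) n + Finsupp.single (1 : Fin 2) n) = dg n from rfl]
  rw [hNNdef, hu0def, hX0, hX1] at this
  exact this
end
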